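/- arXiv:2001.02326 — 2 statements merged into one kernel-verified Lean document; each statement's English description precedes it below -/
import Mathlib

section
/- Let f : ℝ → ℝ be continuous, nonnegative, integrable, with ‖f‖_{L¹} > 0. Suppose there exists x₁ ∈ ℝ such that min_{t∈[0,1]} [f(x₁−t) + f(x₁+t)] > (2/‖f‖_{L¹})·min_{t∈[0,1]} ∫_ℝ f(x) f(x+t) dx. Then f does not maximize the functional F(f) = (min_{t∈[0,1]} ∫_ℝ f(x)f(x+t) dx)/‖f‖_{L¹}²: there exists a nonnegative integrable g with F(g) > F(f). -/
/-!
Add to `f` a bump of mass `ε` spread over a small ball around `x₁`. The mass becomes `‖f‖₁ + ε`,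
so the denominator of `F` grows by `2ε‖f‖₁ + ε²`, while each autocorrelation value at
`t ∈ [0, 1]` grows by `ε` times the bump-average of `f (y - t) + f (y + t)`, plus a nonnegative
`ε²` term. By continuity and compactness of `[0, 1]` that average stays above the threshold
`c > (2 / ‖f‖₁) · min_t ∫ f(x) f(x + t) dx` on a small enough ball, so for small `ε` the first-order
gain beats the loss. If some autocorrelation integral does not exist, its Bochner value is `0`,
so `F f ≤ 0` and any bump does better.
-/

open MeasureTheory Set Filter Topology Metric

/-- The numerator of the functional `F`. -/
noncomputable def minAutocorr (f : ℝ → ℝ) : ℝ :=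
  sInf ((fun t => ∫ x, f x * f (x + t)) '' Icc (0:ℝ) 1)

section MinAutocorr

variable {f : ℝ → ℝ}

theorem minAutocorr_le (hf : ∀ x, 0 ≤ f x) {t : ℝ} (ht : t ∈ Icc (0:ℝ) 1) :
    minAutocorr f ≤ ∫ x, f x * f (x + t) :=
  csInf_le ⟨0, by rintro _ ⟨s, -, rfl⟩; exact integral_nonneg fun x => mul_nonneg (hf x) (hf _)⟩
    (mem_image_of_mem _ ht)

theorem le_minAutocorr {a : ℝ} (h : ∀ t ∈ Icc (0:ℝ) 1, a ≤ ∫ x, f x * f (x + t)) :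
    a ≤ minAutocorr f :=
  le_csInf ((nonempty_Icc.2 zero_le_one).image _) (forall_mem_image.2 h)

theorem minAutocorr_nonneg (hf : ∀ x, 0 ≤ f x) : 0 ≤ minAutocorr f :=
  le_minAutocorr fun _ _ => integral_nonneg fun x => mul_nonneg (hf x) (hf _)

theorem minAutocorr_nonpos_of_not_integrable (hf : ∀ x, 0 ≤ f x) {t : ℝ}
    (ht : t ∈ Icc (0:ℝ) 1) (hnot : ¬Integrable fun x => f x * f (x + t)) :
    minAutocorr f ≤ 0 :=
  (minAutocorr_le hf ht).trans_eq (integral_undef hnot)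

end MinAutocorr

noncomputable def bump (a r : ℝ) : ℝ → ℝ :=
  (closedBall a r).indicator fun _ => (2 * r)⁻¹

section Bump

variable {a r : ℝ}

theorem bump_nonneg (hr : 0 ≤ r) (x : ℝ) : 0 ≤ bump a r x :=
  indicator_nonneg (fun _ _ => by positivity) x

theorem measurable_bump : Measurable (bump a r) :=
  measurable_const.indicator measurableSet_closedBall

theorem norm_bump_le (x : ℝ) : ‖bump a r x‖ ≤ ‖(2 * r)⁻¹‖ :=
  norm_indicator_le_norm_self _ _

theorem integrable_bump : Integrable (bump a r) :=
  (integrable_indicator_iff measurableSet_closedBall).2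
    (integrableOn_const measure_closedBall_lt_top.ne)

theorem integral_bump (hr : 0 < r) : ∫ x, bump a r x = 1 := by
  rw [bump, integral_indicator_const _ measurableSet_closedBall, measureReal_def,
    Real.volume_closedBall, ENNReal.toReal_ofReal (by positivity), smul_eq_mul]
  field_simp

theorem MeasureTheory.Integrable.bump_mul {u : ℝ → ℝ} (hu : Integrable u) :
    Integrable fun x => bump a r x * u x :=
  hu.bdd_mul measurable_bump.aestronglyMeasurable (Eventually.of_forall norm_bump_le)

theorem MeasureTheory.Integrable.mul_bump_comp_add {u : ℝ → ℝ} (hu : Integrable u) (t : ℝ) :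
    Integrable fun x => u x * bump a r (x + t) :=
  hu.mul_bdd (measurable_bump.comp (measurable_add_const t)).aestronglyMeasurable
    (Eventually.of_forall fun x => norm_bump_le (x + t))

theorem le_integral_bump_mul (hr : 0 < r) {u : ℝ → ℝ} (hu : Integrable u) {c : ℝ}
    (hc : ∀ y ∈ closedBall a r, c ≤ u y) : c ≤ ∫ y, bump a r y * u y :=
  calc c = ∫ y, bump a r y * c := by rw [integral_mul_const, integral_bump hr, one_mul]
    _ ≤ ∫ y, bump a r y * u y :=
      integral_mono (integrable_bump.mul_const c) hu.bump_mul fun y => by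
        by_cases hy : y ∈ closedBall a r
        · exact mul_le_mul_of_nonneg_left (hc y hy) (bump_nonneg hr.le y)
        · simp [bump, indicator_of_notMem hy]

end Bump

theorem integral_add_mul_mul_add_mul {α : Type*} [MeasurableSpace α] {μ : Measure α}
    {u v p q : α → ℝ} (ε : ℝ) (huv : Integrable (fun x => u x * v x) μ)
    (huq : Integrable (fun x => u x * q x) μ) (hpv : Integrable (fun x => p x * v x) μ)
    (hpq : Integrable (fun x => p x * q x) μ) :
    ∫ x, (u x + ε * p x) * (v x + ε * q x) ∂μ = ∫ x, u x * v x ∂μ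
      + ε * (∫ x, u x * q x ∂μ + ∫ x, p x * v x ∂μ) + ε ^ 2 * ∫ x, p x * q x ∂μ := by
  have hexpand : ∀ x, (u x + ε * p x) * (v x + ε * q x)
      = u x * v x + ε * (u x * q x + p x * v x) + ε ^ 2 * (p x * q x) := fun x => by ring
  simp_rw [hexpand]
  rw [integral_add ?_ (hpq.const_mul _), integral_add huv ?_, integral_const_mul,
    integral_const_mul, integral_add huq hpv]
  exacts [(huq.add hpv).const_mul ε, huv.add ((huq.add hpv).const_mul ε)]

theorem integral_mul_comp_add_eq (u v : ℝ → ℝ) (t : ℝ) :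
    ∫ x, u x * v (x + t) = ∫ x, v x * u (x - t) := by
  rw [← integral_add_right_eq_self (fun x => v x * u (x - t)) t]
  simp only [add_sub_cancel_right, mul_comm]

theorem eventually_forall_lt_of_lt_sInf_image {X Y : Type*} [TopologicalSpace X]
    [TopologicalSpace Y] {φ : X × Y → ℝ} (hφ : Continuous φ) {K : Set Y} (hK : IsCompact K)
    {x₀ : X} {c : ℝ} (hc : c < sInf ((fun y => φ (x₀, y)) '' K)) :
    ∀ᶠ x in 𝓝 x₀, ∀ y ∈ K, c < φ (x, y) :=
  hK.eventually_forall_of_forall_eventually fun _ hy =>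
    (isOpen_lt continuous_const hφ).mem_nhds <| hc.trans_le <|
      csInf_le (hK.bddBelow_image (hφ.comp (Continuous.prodMk_right x₀)).continuousOn)
        (mem_image_of_mem _ hy)

theorem exists_pos_div_sq_lt_add_mul_div_sq {N I c : ℝ} (hN : 0 < N) (hI : 0 ≤ I)
    (hc : 2 * I < c * N) : ∃ ε > 0, I / N ^ 2 < (I + ε * c) / (N + ε) ^ 2 := by
  set D := c * N ^ 2 - 2 * N * I
  have hD : 0 < D := by nlinarith
  refine ⟨D / (I + 1), by positivity, ?_⟩
  have hεI : D / (I + 1) * I < D := by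
    rw [div_mul_eq_mul_div, div_lt_iff₀ (by positivity)]; nlinarith
  rw [div_lt_div_iff₀ (by positivity) (by positivity)]
  nlinarith [mul_lt_mul_of_pos_left hεI (show 0 < D / (I + 1) by positivity)]

theorem le_minAutocorr_add_mul_bump {f : ℝ → ℝ} (hpos : ∀ x, 0 ≤ f x) (hf : Integrable f)
    (hint : ∀ t ∈ Icc (0:ℝ) 1, Integrable fun x => f x * f (x + t)) {a r c ε : ℝ} (hr : 0 < r)
    (hε : 0 ≤ ε) (hc : ∀ y ∈ closedBall a r, ∀ t ∈ Icc (0:ℝ) 1, c ≤ f (y - t) + f (y + t)) :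
    minAutocorr f + ε * c ≤ minAutocorr fun x => f x + ε * bump a r x := by
  refine le_minAutocorr fun t ht => ?_
  have hcross : c ≤ (∫ x, f x * bump a r (x + t)) + ∫ x, bump a r x * f (x + t) := by
    rw [integral_mul_comp_add_eq f (bump a r), ← integral_add (hf.comp_sub_right t).bump_mul
      (hf.comp_add_right t).bump_mul]
    simp_rw [← mul_add]
    exact le_integral_bump_mul hr ((hf.comp_sub_right t).add (hf.comp_add_right t))
      fun y hy => hc y hy t ht
  have hsq : 0 ≤ ∫ x, bump a r x * bump a r (x + t) :=
    integral_nonneg fun x => mul_nonneg (bump_nonneg hr.le _) (bump_nonneg hr.le _)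
  rw [integral_add_mul_mul_add_mul ε (hint t ht) (hf.mul_bump_comp_add t)
    (hf.comp_add_right t).bump_mul (integrable_bump.mul_bump_comp_add t)]
  linarith [minAutocorr_le hpos ht, mul_le_mul_of_nonneg_left hcross hε,
    mul_nonneg (sq_nonneg ε) hsq]

theorem bump_half_mul_quarter_le {t : ℝ} (ht : t ∈ Icc (0:ℝ) 1) (y : ℝ) :
    bump (1 / 2) (1 / 2) y * (1 / 4) ≤ bump 1 1 y * bump 1 1 (y + t) := by
  by_cases hy : y ∈ closedBall (1 / 2 : ℝ) (1 / 2)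
  · obtain ⟨hy0, hy1⟩ : y ∈ Icc (1 / 2 - 1 / 2 : ℝ) (1 / 2 + 1 / 2) := by
      rwa [← Real.closedBall_eq_Icc]
    have hy₁ : y ∈ closedBall (1 : ℝ) 1 := by
      rw [Real.closedBall_eq_Icc]; constructor <;> linarith
    have hy₂ : y + t ∈ closedBall (1 : ℝ) 1 := by
      rw [Real.closedBall_eq_Icc]; constructor <;> linarith [ht.1, ht.2]
    simp only [bump, indicator_of_mem hy, indicator_of_mem hy₁, indicator_of_mem hy₂]
    norm_num
  · simp only [bump, indicator_of_notMem hy, zero_mul]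
    exact mul_nonneg (bump_nonneg zero_le_one _) (bump_nonneg zero_le_one _)

theorem exists_integrable_nonneg_minAutocorr_div_sq_pos :
    ∃ g : ℝ → ℝ, Integrable g ∧ (∀ x, 0 ≤ g x) ∧ 0 < minAutocorr g / (∫ x, g x) ^ 2 := by
  refine ⟨bump 1 1, integrable_bump, bump_nonneg zero_le_one, ?_⟩
  have hquarter : 1 / 4 ≤ minAutocorr (bump 1 1) := le_minAutocorr fun t ht =>
    calc (1 / 4 : ℝ) = ∫ y, bump (1 / 2) (1 / 2) y * (1 / 4) := by
          rw [integral_mul_const, integral_bump (by norm_num), one_mul]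
      _ ≤ ∫ y, bump 1 1 y * bump 1 1 (y + t) :=
        integral_mono (integrable_bump.mul_const _) (integrable_bump.mul_bump_comp_add t)
          (bump_half_mul_quarter_le ht)
  rw [integral_bump one_pos]
  linarith

theorem not_maximizer_of_first_condition_fails (f : ℝ → ℝ)
    (hcont : Continuous f) (hf : Integrable f) (hpos : ∀ x, 0 ≤ f x)
    (hnorm : 0 < ∫ x, f x)
    (x₁ : ℝ)
    (hx₁ : (2 / ∫ x, f x) * sInf ((fun t => ∫ x, f x * f (x + t)) '' Icc (0:ℝ) 1)
        < sInf ((fun t => f (x₁ - t) + f (x₁ + t)) '' Icc (0:ℝ) 1)) :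
    ∃ g : ℝ → ℝ, Integrable g ∧ (∀ x, 0 ≤ g x) ∧
      sInf ((fun t => ∫ x, f x * f (x + t)) '' Icc (0:ℝ) 1) / (∫ x, f x)^2
        < sInf ((fun t => ∫ x, g x * g (x + t)) '' Icc (0:ℝ) 1) / (∫ x, g x)^2 := by
  change ∃ g : ℝ → ℝ, Integrable g ∧ (∀ x, 0 ≤ g x) ∧
    minAutocorr f / (∫ x, f x) ^ 2 < minAutocorr g / (∫ x, g x) ^ 2
  by_cases hint : ∀ t ∈ Icc (0:ℝ) 1, Integrable fun x => f x * f (x + t)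
  · obtain ⟨c, hfc, hcx₁⟩ := exists_between hx₁
    obtain ⟨r, hr, hball⟩ := nhds_basis_closedBall.eventually_iff.1 <|
      eventually_forall_lt_of_lt_sInf_image (φ := fun p => f (p.1 - p.2) + f (p.1 + p.2))
        (by fun_prop) isCompact_Icc hcx₁
    have hgain : 2 * minAutocorr f < c * ∫ x, f x := by
      rwa [div_mul_eq_mul_div, div_lt_iff₀ hnorm] at hfc
    obtain ⟨ε, hε, hlt⟩ := exists_pos_div_sq_lt_add_mul_div_sq hnorm (minAutocorr_nonneg hpos) hgain
    refine ⟨fun x => f x + ε * bump x₁ r x, hf.add (integrable_bump.const_mul ε),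
      fun x => add_nonneg (hpos x) (mul_nonneg hε.le (bump_nonneg hr.le x)), ?_⟩
    rw [integral_add hf (integrable_bump.const_mul ε), integral_const_mul, integral_bump hr,
      mul_one]
    exact hlt.trans_le <| div_le_div_of_nonneg_right (le_minAutocorr_add_mul_bump hpos hf hint hr
      hε.le fun y hy t ht => (hball hy t ht).le) (by positivity)
  · push Not at hint
    obtain ⟨t, ht, hnot⟩ := hint
    obtain ⟨g, hg, hg₀, hgF⟩ := exists_integrable_nonneg_minAutocorr_div_sq_pos
    exact ⟨g, hg, hg₀, (div_nonpos_of_nonpos_of_nonneg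
      (minAutocorr_nonpos_of_not_integrable hpos ht hnot) (sq_nonneg _)).trans_lt hgF⟩
end

section
/- Let f : ℝ → ℝ be continuous, nonnegative, integrable, with ‖f‖_{L¹} > 0. Suppose there exist x₁ ∈ ℝ and x₂ in the support of f with x₁ ≠ x₂ such that min_{t∈[0,1]} [f(x₁−t) + f(x₁+t)] > max_{t∈[0,1]} [f(x₂−t) + f(x₂+t)]. Then f does not maximize F(f) = (min_{t∈[0,1]} ∫_ℝ f(x)f(x+t) dx)/‖f‖_{L¹}²: there exists a nonnegative integrable h with ‖h‖_{L¹} = ‖f‖_{L¹} and min_{t∈[0,1]} ∫ h(x)h(x+t) dx > min_{t∈[0,1]} ∫ f(x)f(x+t) dx. -/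
/-!
Move mass `ε` per unit length from a small interval `J₂` around a point near `x₂` where `f > 0`
to an interval `J₁` of the same length around `x₁`. This keeps `f` nonnegative and its integral
fixed, and changes the autocorrelation at shift `t` by
`ε (∫_{J₁} - ∫_{J₂}) (f (· - t) + f (· + t)) + O(ε²)`. By continuity and compactness of `[0, 1]`,
the symmetric sums `f (y - t) + f (y + t)` stay above some `A` on `J₁` and below some `B < A` on
`J₂`, uniformly in `t`, so for `ε ≤ (A - B) / 4` every autocorrelation gains at least
`ε |J₁| (A - B) / 2`. If the minimal autocorrelation of `f` is not positive, a multiple of the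
indicator of `[0, 2]` already does better.
-/

open MeasureTheory Set Filter Topology Metric

noncomputable def autocorr (f : ℝ → ℝ) (t : ℝ) : ℝ := ∫ x, f x * f (x + t)

lemma autocorr_add {f g : ℝ → ℝ} {t C : ℝ} (hf : Integrable f)
    (hft : Integrable fun x => f x * f (x + t)) (hg : Integrable g) (hgC : ∀ x, ‖g x‖ ≤ C) :
    autocorr (f + g) t = autocorr f t + (∫ x, g x * (f (x - t) + f (x + t))) + autocorr g t := by
  have hgm := hg.aestronglyMeasurable
  have hfg : Integrable fun x => f x * g (x + t) :=
    hf.mul_bdd (hg.comp_add_right t).aestronglyMeasurable (ae_of_all _ fun x => hgC _)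
  have hgf : Integrable fun x => g x * f (x + t) :=
    (hf.comp_add_right t).bdd_mul hgm (ae_of_all _ hgC)
  have hgf' : Integrable fun x => g x * f (x - t) :=
    (hf.comp_sub_right t).bdd_mul hgm (ae_of_all _ hgC)
  have hgg : Integrable fun x => g x * g (x + t) :=
    (hg.comp_add_right t).bdd_mul hgm (ae_of_all _ hgC)
  have hshift : ∫ x, f x * g (x + t) = ∫ x, g x * f (x - t) := by
    rw [← integral_add_right_eq_self (fun x => g x * f (x - t)) t]
    simp only [add_sub_cancel_right, mul_comm]
  have hexpand : (fun x => (f + g) x * (f + g) (x + t)) =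
      fun x => f x * f (x + t) + f x * g (x + t) + g x * f (x + t) + g x * g (x + t) := by
    ext x; simp only [Pi.add_apply]; ring
  have h₂ : Integrable fun x => f x * f (x + t) + f x * g (x + t) := hft.add hfg
  have h₃ : Integrable fun x => f x * f (x + t) + f x * g (x + t) + g x * f (x + t) := h₂.add hgf
  simp only [autocorr, mul_add]
  rw [hexpand, integral_add h₃ hgg, integral_add h₂ hgf, integral_add hft hfg,
    integral_add hgf' hgf, hshift]
  ring

lemma neg_mul_integral_norm_le_autocorr {g : ℝ → ℝ} {t C : ℝ} (hg : Integrable g)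
    (hgC : ∀ x, ‖g x‖ ≤ C) : -(C * ∫ x, ‖g x‖) ≤ autocorr g t := by
  rw [← integral_const_mul, ← integral_neg]
  refine integral_mono (hg.norm.const_mul C).neg
    ((hg.comp_add_right t).bdd_mul hg.aestronglyMeasurable (ae_of_all _ hgC)) fun x => ?_
  calc -(C * ‖g x‖) ≤ -|g x * g (x + t)| := by
        rw [neg_le_neg_iff, abs_mul, mul_comm C, Real.norm_eq_abs]
        exact mul_le_mul_of_nonneg_left (hgC _) (abs_nonneg _)
    _ ≤ g x * g (x + t) := neg_abs_le _

section MassTransfer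

variable {α : Type*} {J₁ J₂ : Set α} {ε : ℝ}

noncomputable def massTransfer (J₁ J₂ : Set α) (ε : ℝ) : α → ℝ :=
  J₁.indicator (fun _ => ε) - J₂.indicator (fun _ => ε)

lemma norm_massTransfer_le_indicator_add (hε : 0 ≤ ε) (x : α) :
    ‖massTransfer J₁ J₂ ε x‖ ≤ J₁.indicator (fun _ => ε) x + J₂.indicator (fun _ => ε) x := by
  simp only [massTransfer, Pi.sub_apply, Real.norm_eq_abs, indicator]
  split_ifs <;> simp [abs_of_nonneg hε, hε]

lemma norm_massTransfer_le (hε : 0 ≤ ε) (x : α) : ‖massTransfer J₁ J₂ ε x‖ ≤ ε := by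
  simp only [massTransfer, Pi.sub_apply, Real.norm_eq_abs, indicator]
  split_ifs <;> simp [abs_of_nonneg hε, hε]

lemma add_massTransfer_nonneg {f : α → ℝ} (hf : ∀ x, 0 ≤ f x) (hfε : ∀ x ∈ J₂, ε ≤ f x)
    (hε : 0 ≤ ε) (x : α) : 0 ≤ f x + massTransfer J₁ J₂ ε x := by
  simp only [massTransfer, Pi.sub_apply]
  have h₁ : 0 ≤ J₁.indicator (fun _ => ε) x := indicator_nonneg (fun _ _ => hε) x
  by_cases h₂ : x ∈ J₂
  · rw [indicator_of_mem h₂]; linarith [hfε x h₂]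
  · rw [indicator_of_notMem h₂]; linarith [hf x]

variable [MeasurableSpace α] {μ : Measure α}

lemma integrable_massTransfer (hJ₁ : MeasurableSet J₁) (hJ₂ : MeasurableSet J₂)
    (hμ₁ : μ J₁ ≠ ⊤) (hμ₂ : μ J₂ ≠ ⊤) : Integrable (massTransfer J₁ J₂ ε) μ :=
  ((integrableOn_const hμ₁).integrable_indicator hJ₁).sub
    ((integrableOn_const hμ₂).integrable_indicator hJ₂)

lemma integral_massTransfer (hJ₁ : MeasurableSet J₁) (hJ₂ : MeasurableSet J₂)
    (hμ₁ : μ J₁ ≠ ⊤) (hμ₂ : μ J₂ ≠ ⊤) :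
    ∫ x, massTransfer J₁ J₂ ε x ∂μ = (μ.real J₁ - μ.real J₂) * ε := by
  simp only [massTransfer, Pi.sub_apply]
  rw [integral_sub ((integrableOn_const hμ₁).integrable_indicator hJ₁)
    ((integrableOn_const hμ₂).integrable_indicator hJ₂), integral_indicator hJ₁,
    integral_indicator hJ₂, setIntegral_const, setIntegral_const, smul_eq_mul, smul_eq_mul, sub_mul]

lemma integral_norm_massTransfer_le (hε : 0 ≤ ε) (hJ₁ : MeasurableSet J₁)
    (hJ₂ : MeasurableSet J₂) (hμ₁ : μ J₁ ≠ ⊤) (hμ₂ : μ J₂ ≠ ⊤) :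
    ∫ x, ‖massTransfer J₁ J₂ ε x‖ ∂μ ≤ (μ.real J₁ + μ.real J₂) * ε := by
  have hi₁ := (integrableOn_const (C := ε) hμ₁).integrable_indicator hJ₁
  have hi₂ := (integrableOn_const (C := ε) hμ₂).integrable_indicator hJ₂
  calc ∫ x, ‖massTransfer J₁ J₂ ε x‖ ∂μ
      ≤ ∫ x, (J₁.indicator (fun _ => ε) x + J₂.indicator (fun _ => ε) x) ∂μ :=
        integral_mono (integrable_massTransfer hJ₁ hJ₂ hμ₁ hμ₂).norm (hi₁.add hi₂)
          (norm_massTransfer_le_indicator_add hε)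
    _ = (μ.real J₁ + μ.real J₂) * ε := by
        rw [integral_add hi₁ hi₂, integral_indicator hJ₁, integral_indicator hJ₂,
          setIntegral_const, setIntegral_const, smul_eq_mul, smul_eq_mul, add_mul]

lemma integral_massTransfer_mul {F : α → ℝ} (hJ₁ : MeasurableSet J₁) (hJ₂ : MeasurableSet J₂)
    (hF₁ : IntegrableOn F J₁ μ) (hF₂ : IntegrableOn F J₂ μ) :
    ∫ x, massTransfer J₁ J₂ ε x * F x ∂μ = ε * ((∫ x in J₁, F x ∂μ) - ∫ x in J₂, F x ∂μ) := by
  have h : ∀ J : Set α, ∀ x, J.indicator (fun _ => ε) x * F x = J.indicator (fun x => ε * F x) x :=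
    fun J x => (indicator_mul_left J _ F).symm
  simp only [massTransfer, Pi.sub_apply, sub_mul, h]
  rw [integral_sub (IntegrableOn.integrable_indicator (hF₁.const_mul ε) hJ₁)
    (IntegrableOn.integrable_indicator (hF₂.const_mul ε) hJ₂), integral_indicator hJ₁,
    integral_indicator hJ₂, integral_const_mul, integral_const_mul, mul_sub]

end MassTransfer

lemma autocorr_add_massTransfer_ge {f : ℝ → ℝ} {J₁ J₂ : Set ℝ} {t A B ε : ℝ}
    (hf : Integrable f) (hft : Integrable fun x => f x * f (x + t))
    (hJ₁ : MeasurableSet J₁) (hJ₂ : MeasurableSet J₂) (hfin : volume J₁ ≠ ⊤)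
    (hvol : volume J₁ = volume J₂) (hε : 0 ≤ ε) (hεAB : 4 * ε ≤ A - B)
    (hA : ∀ y ∈ J₁, A ≤ f (y - t) + f (y + t)) (hB : ∀ y ∈ J₂, f (y - t) + f (y + t) ≤ B) :
    autocorr f t + volume.real J₁ * ε * (A - B) / 2 ≤ autocorr (f + massTransfer J₁ J₂ ε) t := by
  have hfin₂ : volume J₂ ≠ ⊤ := hvol ▸ hfin
  have hvol' : volume.real J₂ = volume.real J₁ := by simp only [measureReal_def, hvol]
  have hF : Integrable fun y => f (y - t) + f (y + t) :=
    (hf.comp_sub_right t).add (hf.comp_add_right t)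
  have hF₁ : volume.real J₁ * A ≤ ∫ y in J₁, f (y - t) + f (y + t) := by
    simpa using setIntegral_mono_on (integrableOn_const hfin) hF.integrableOn hJ₁ hA
  have hF₂ : ∫ y in J₂, f (y - t) + f (y + t) ≤ volume.real J₁ * B := by
    simpa [hvol'] using setIntegral_mono_on hF.integrableOn (integrableOn_const hfin₂) hJ₂ hB
  have hquad := neg_mul_integral_norm_le_autocorr (t := t)
    (integrable_massTransfer hJ₁ hJ₂ hfin hfin₂) (norm_massTransfer_le (J₁ := J₁) (J₂ := J₂) hε)
  have hnorm := integral_norm_massTransfer_le hε hJ₁ hJ₂ hfin hfin₂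
  rw [autocorr_add hf hft (integrable_massTransfer hJ₁ hJ₂ hfin hfin₂) (norm_massTransfer_le hε),
    integral_massTransfer_mul hJ₁ hJ₂ hF.integrableOn hF.integrableOn]
  rw [hvol'] at hnorm
  have hv : 0 ≤ volume.real J₁ := measureReal_nonneg
  nlinarith [mul_le_mul_of_nonneg_left (sub_le_sub hF₁ hF₂) hε,
    mul_le_mul_of_nonneg_left hnorm hε, mul_nonneg (mul_nonneg hv hε) (sub_nonneg.2 hεAB)]

lemma eventually_forall_mem_of_continuous {X Y Z : Type*} [TopologicalSpace X]
    [TopologicalSpace Y] [TopologicalSpace Z] {φ : X → Y → Z}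
    (hφ : Continuous (Function.uncurry φ)) {K : Set Y} (hK : IsCompact K) {U : Set Z}
    (hU : IsOpen U) {x : X} (hx : ∀ y ∈ K, φ x y ∈ U) : ∀ᶠ x' in 𝓝 x, ∀ y ∈ K, φ x' y ∈ U :=
  hK.eventually_forall_of_forall_eventually fun y hy =>
    hφ.continuousAt.preimage_mem_nhds (hU.mem_nhds (hx y hy))

lemma exists_closedBall_gap {f : ℝ → ℝ} (hcont : Continuous f) (hpos : ∀ x, 0 ≤ f x)
    {x₁ x₂ : ℝ} (hx₂ : x₂ ∈ tsupport f)
    (hgap : sSup ((fun t => f (x₂ - t) + f (x₂ + t)) '' Icc (0:ℝ) 1)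
        < sInf ((fun t => f (x₁ - t) + f (x₁ + t)) '' Icc (0:ℝ) 1)) :
    ∃ y₂ δ ε A B : ℝ, 0 < δ ∧ 0 < ε ∧ 4 * ε ≤ A - B ∧ (∀ y ∈ closedBall y₂ δ, ε ≤ f y) ∧
      ∀ t ∈ Icc (0:ℝ) 1, (∀ y ∈ closedBall x₁ δ, A ≤ f (y - t) + f (y + t)) ∧
        ∀ y ∈ closedBall y₂ δ, f (y - t) + f (y + t) ≤ B := by
  obtain ⟨B, hSB, hBI⟩ := exists_between hgap
  obtain ⟨A, hBA, hAI⟩ := exists_between hBI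
  have hφ : Continuous (Function.uncurry fun y t => f (y - t) + f (y + t)) := by fun_prop
  have hφ' (x : ℝ) : Continuous fun t => f (x - t) + f (x + t) := by fun_prop
  have h₁ : ∀ᶠ y in 𝓝 x₁, ∀ t ∈ Icc (0:ℝ) 1, f (y - t) + f (y + t) ∈ Ioi A :=
    eventually_forall_mem_of_continuous hφ isCompact_Icc isOpen_Ioi fun t ht =>
      hAI.trans_le (csInf_le (isCompact_Icc.image (hφ' x₁)).bddBelow (mem_image_of_mem _ ht))
  have h₂ : ∀ᶠ y in 𝓝 x₂, ∀ t ∈ Icc (0:ℝ) 1, f (y - t) + f (y + t) ∈ Iio B :=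
    eventually_forall_mem_of_continuous hφ isCompact_Icc isOpen_Iio fun t ht =>
      (le_csSup (isCompact_Icc.image (hφ' x₂)).bddAbove (mem_image_of_mem _ ht)).trans_lt hSB
  obtain ⟨y₂, hy₂, hfy₂⟩ := mem_closure_iff_nhds.1 hx₂ _ h₂.eventually_nhds
  have hfy₂ : 0 < f y₂ := (hpos y₂).lt_of_ne' hfy₂
  have h₃ : ∀ᶠ y in 𝓝 y₂, f y₂ / 2 < f y :=
    hcont.continuousAt.eventually (lt_mem_nhds (half_lt_self hfy₂))
  obtain ⟨δ₁, hδ₁, hball₁⟩ := nhds_basis_closedBall.eventually_iff.1 h₁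
  obtain ⟨δ₂, hδ₂, hball₂⟩ := nhds_basis_closedBall.eventually_iff.1 (hy₂.and h₃)
  have hsub₁ := closedBall_subset_closedBall (x := x₁) (min_le_left δ₁ δ₂)
  have hsub₂ := closedBall_subset_closedBall (x := y₂) (min_le_right δ₁ δ₂)
  refine ⟨y₂, min δ₁ δ₂, min (f y₂ / 2) ((A - B) / 4), A, B, lt_min hδ₁ hδ₂,
    lt_min (half_pos hfy₂) (by linarith), by linarith [min_le_right (f y₂ / 2) ((A - B) / 4)],
    fun y hy => (min_le_left _ _).trans (hball₂ (hsub₂ hy)).2.le, fun t ht => ⟨?_, ?_⟩⟩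
  · exact fun y hy => (hball₁ (hsub₁ hy) t ht).le
  · exact fun y hy => ((hball₂ (hsub₂ hy)).1 t ht).le

lemma exists_integral_eq_forall_autocorr_ge {M : ℝ} (hM : 0 ≤ M) :
    ∃ h : ℝ → ℝ, Integrable h ∧ (∀ x, 0 ≤ h x) ∧ ∫ x, h x = M ∧
      ∀ t ∈ Icc (0:ℝ) 1, (M / 2) ^ 2 ≤ autocorr h t := by
  set h : ℝ → ℝ := (Icc 0 2).indicator fun _ => M / 2
  have hh : Integrable h := (integrableOn_const measure_Icc_lt_top.ne).integrable_indicator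
    measurableSet_Icc
  have hnn : ∀ x, 0 ≤ h x := indicator_nonneg fun _ _ => by positivity
  refine ⟨h, hh, hnn, ?_, fun t ht => ?_⟩
  · rw [integral_indicator measurableSet_Icc, setIntegral_const,
      Real.volume_real_Icc_of_le zero_le_two, smul_eq_mul]
    ring
  have hle : ∀ x, (Icc 0 1).indicator (fun _ => (M / 2) ^ 2) x ≤ h x * h (x + t) := by
    intro x
    by_cases hx : x ∈ Icc (0:ℝ) 1
    · have hxt : x + t ∈ Icc (0:ℝ) 2 := ⟨by linarith [hx.1, ht.1], by linarith [hx.2, ht.2]⟩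
      have hx' : x ∈ Icc (0:ℝ) 2 := ⟨hx.1, by linarith [hx.2]⟩
      simp only [h, indicator_of_mem hx, indicator_of_mem hx', indicator_of_mem hxt, sq, le_refl]
    · rw [indicator_of_notMem hx]
      exact mul_nonneg (hnn x) (hnn _)
  calc (M / 2) ^ 2 = ∫ x, (Icc 0 1).indicator (fun _ => (M / 2) ^ 2) x := by
        rw [integral_indicator measurableSet_Icc, setIntegral_const,
          Real.volume_real_Icc_of_le zero_le_one, smul_eq_mul, sub_zero, one_mul]
    _ ≤ autocorr h t :=
        integral_mono ((integrableOn_const measure_Icc_lt_top.ne).integrable_indicator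
          measurableSet_Icc) ((hh.comp_add_right t).bdd_mul hh.aestronglyMeasurable
          (ae_of_all _ fun x => (norm_indicator_le_norm_self _ x).trans_eq rfl)) hle

lemma exists_integral_eq_forall_autocorr_add_le {f : ℝ → ℝ} (hcont : Continuous f)
    (hf : Integrable f) (hpos : ∀ x, 0 ≤ f x) {x₁ x₂ : ℝ} (hx₂ : x₂ ∈ tsupport f)
    (hgap : sSup ((fun t => f (x₂ - t) + f (x₂ + t)) '' Icc (0:ℝ) 1)
        < sInf ((fun t => f (x₁ - t) + f (x₁ + t)) '' Icc (0:ℝ) 1))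
    (hff : ∀ t ∈ Icc (0:ℝ) 1, Integrable fun x => f x * f (x + t)) :
    ∃ h : ℝ → ℝ, Integrable h ∧ (∀ x, 0 ≤ h x) ∧ ∫ x, h x = ∫ x, f x ∧
      ∃ c > 0, ∀ t ∈ Icc (0:ℝ) 1, autocorr f t + c ≤ autocorr h t := by
  obtain ⟨y₂, δ, ε, A, B, hδ, hε, hεAB, hfε, hbounds⟩ :=
    exists_closedBall_gap hcont hpos hx₂ hgap
  have hAB : 0 < A - B := by linarith
  have hvol : volume (closedBall x₁ δ) = volume (closedBall y₂ δ) := by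
    simp only [Real.volume_closedBall]
  have hfin : volume (closedBall x₁ δ) ≠ ⊤ := measure_closedBall_lt_top.ne
  have hg := integrable_massTransfer (ε := ε) measurableSet_closedBall measurableSet_closedBall
    hfin (hvol ▸ hfin)
  refine ⟨f + massTransfer (closedBall x₁ δ) (closedBall y₂ δ) ε, hf.add hg,
    add_massTransfer_nonneg hpos hfε hε.le, ?_, 2 * δ * ε * (A - B) / 2, by positivity, ?_⟩
  · rw [Pi.add_def, integral_add hf hg, integral_massTransfer measurableSet_closedBall
      measurableSet_closedBall hfin (hvol ▸ hfin), measureReal_def, measureReal_def, hvol,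
      sub_self, zero_mul, add_zero]
  · intro t ht
    rw [← Real.volume_real_closedBall hδ.le (a := x₁)]
    exact autocorr_add_massTransfer_ge hf (hff t ht) measurableSet_closedBall
      measurableSet_closedBall hfin hvol hε.le hεAB (hbounds t ht).1 (hbounds t ht).2

theorem not_maximizer_of_second_condition_fails_general (f : ℝ → ℝ)
    (hcont : Continuous f) (hf : Integrable f) (hpos : ∀ x, 0 ≤ f x)
    (hnorm : 0 < ∫ x, f x)
    (x₁ x₂ : ℝ) (hx₂ : x₂ ∈ tsupport f)
    (hgap : sSup ((fun t => f (x₂ - t) + f (x₂ + t)) '' Icc (0:ℝ) 1)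
        < sInf ((fun t => f (x₁ - t) + f (x₁ + t)) '' Icc (0:ℝ) 1)) :
    ∃ h : ℝ → ℝ, Integrable h ∧ (∀ x, 0 ≤ h x) ∧
      (∫ x, h x) = (∫ x, f x) ∧
      sInf ((fun t => ∫ x, f x * f (x + t)) '' Icc (0:ℝ) 1)
        < sInf ((fun t => ∫ x, h x * h (x + t)) '' Icc (0:ℝ) 1) := by
  set m := sInf (autocorr f '' Icc 0 1)
  have hbdd : BddBelow (autocorr f '' Icc 0 1) :=
    ⟨0, forall_mem_image.2 fun t _ => integral_nonneg fun x => mul_nonneg (hpos x) (hpos _)⟩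
  have hm (t) (ht : t ∈ Icc (0:ℝ) 1) : m ≤ autocorr f t := csInf_le hbdd (mem_image_of_mem _ ht)
  suffices ∃ h : ℝ → ℝ, Integrable h ∧ (∀ x, 0 ≤ h x) ∧ ∫ x, h x = ∫ x, f x ∧
      ∃ c > 0, ∀ t ∈ Icc (0:ℝ) 1, m + c ≤ autocorr h t by
    obtain ⟨h, hh, hhpos, hhint, c, hc, hle⟩ := this
    refine ⟨h, hh, hhpos, hhint, ?_⟩
    have := le_csInf ((nonempty_Icc.2 zero_le_one).image _) (forall_mem_image.2 hle)
    exact (lt_add_of_pos_right m hc).trans_le this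
  rcases le_or_gt m 0 with hm₀ | hm₀
  · obtain ⟨h, hh, hhpos, hhint, hle⟩ := exists_integral_eq_forall_autocorr_ge hnorm.le
    exact ⟨h, hh, hhpos, hhint, ((∫ x, f x) / 2) ^ 2, by positivity,
      fun t ht => by linarith [hle t ht]⟩
  -- `f` need not be bounded, so `f * f (· + t)` may fail to be integrable; its integral is then
  -- the junk value `0`, which `0 < m` rules out.
  have hff (t) (ht : t ∈ Icc (0:ℝ) 1) : Integrable fun x => f x * f (x + t) := by
    by_contra hni
    have := hm t ht
    rw [autocorr, integral_undef hni] at this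
    linarith
  obtain ⟨h, hh, hhpos, hhint, c, hc, hle⟩ :=
    exists_integral_eq_forall_autocorr_add_le hcont hf hpos hx₂ hgap hff
  exact ⟨h, hh, hhpos, hhint, c, hc, fun t ht => by linarith [hle t ht, hm t ht]⟩

theorem not_maximizer_of_second_condition_fails (f : ℝ → ℝ)
    (hcont : Continuous f) (hf : Integrable f) (hpos : ∀ x, 0 ≤ f x)
    (hnorm : 0 < ∫ x, f x)
    (x₁ x₂ : ℝ) (hx₂ : x₂ ∈ tsupport f) (hne : x₁ ≠ x₂)
    (hgap : sSup ((fun t => f (x₂ - t) + f (x₂ + t)) '' Icc (0:ℝ) 1)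
        < sInf ((fun t => f (x₁ - t) + f (x₁ + t)) '' Icc (0:ℝ) 1)) :
    ∃ h : ℝ → ℝ, Integrable h ∧ (∀ x, 0 ≤ h x) ∧
      (∫ x, h x) = (∫ x, f x) ∧
      sInf ((fun t => ∫ x, f x * f (x + t)) '' Icc (0:ℝ) 1)
        < sInf ((fun t => ∫ x, h x * h (x + t)) '' Icc (0:ℝ) 1) :=
  not_maximizer_of_second_condition_fails_general f hcont hf hpos hnorm x₁ x₂ hx₂ hgap
end
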